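/- arXiv:1811.08363 — 5 statements merged into one kernel-verified Lean document; each statement's English description precedes it below -/
import Mathlib

section
/- Let G be a bridgeless cubic graph and let M1, M2 be perfect matchings of G such that M1 ∩ M2 contains no odd cut of G. Then the complement of M1 ∪ M2 is bipartite (contains no odd cycle). -/
/-!
On an odd cycle `C` of `G - (M₁ ∪ M₂)` every vertex `v` already has two neighbours along `C`,
joined to `v` by edges outside `M₁ ∪ M₂`. Since `G` is cubic, the edge of `M₁` at `v` and the
edge of `M₂` at `v` are both the third edge at `v`, so every edge leaving `V(C)` lies in
`M₁ ∩ M₂`, and `V(C)` has odd size: an odd cut inside `M₁ ∩ M₂`.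
-/

open SimpleGraph

/-- A graph is cubic if every vertex has exactly 3 neighbours. -/
def IsCubic {V : Type*} (G : SimpleGraph V) : Prop :=
  ∀ v : V, (G.neighborSet v).ncard = 3

/-- A graph is bridgeless if no edge is a bridge. -/
def Bridgeless {V : Type*} (G : SimpleGraph V) : Prop :=
  ∀ e : Sym2 V, ¬ G.IsBridge e

/-- The edge boundary `∂W`: edges of `G` with exactly one endpoint in `W`. -/
def edgeBoundary {V : Type*} (G : SimpleGraph V) (W : Set V) : Set (Sym2 V) :=
  {e | e ∈ G.edgeSet ∧ ∃ u v : V, e = s(u, v) ∧ u ∈ W ∧ v ∉ W}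

namespace SimpleGraph

variable {V : Type*} {G : SimpleGraph V}

namespace Walk

theorem exists_isPath_parity_or_exists_odd_isCycle [DecidableEq V] {u v : V} (p : G.Walk u v) :
    (∃ q : G.Walk u v, q.IsPath ∧ (Even q.length ↔ Even p.length)) ∨
      ∃ (x : V) (c : G.Walk x x), c.IsCycle ∧ Odd c.length := by
  induction p with
  | nil => exact .inl ⟨nil, .nil, Iff.rfl⟩
  | @cons u w v h p ih =>
    obtain ⟨q, hq, hpar⟩ | hcycle := ih
    · -- If `u` lies on `q`, cutting `q` at `u` gives a closed walk `u → w ⇝ u`, a cycle when odd,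
      -- and a path `u ⇝ v`; one of the two has the parity we need.
      by_cases hu : u ∈ q.support
      · set t := q.takeUntil u hu
        set r := q.dropUntil u hu
        have hlen : t.length + r.length = q.length := by
          rw [← length_append, take_spec]
        rcases Nat.even_or_odd t.length with ht | ht
        · refine .inr ⟨u, cons h t, ?_, by simpa [Nat.odd_add_one] using ht⟩
          rw [isCycle_iff_isPath_tail_and_le_length]
          refine ⟨by simpa using hq.takeUntil hu, ?_⟩
          have : t.length ≠ 0 := fun h0 => h.ne (eq_of_length_eq_zero h0).symm
          rw [length_cons]
          obtain ⟨k, hk⟩ := ht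
          omega
        · refine .inl ⟨r, hq.dropUntil hu, ?_⟩
          rw [length_cons, Nat.even_add_one, ← hpar, ← hlen, Nat.even_add]
          simp only [← Nat.not_odd_iff_even, ht]
          tauto
      · refine .inl ⟨cons h q, hq.cons hu, ?_⟩
        simp only [length_cons, Nat.even_add_one, hpar]
    · exact .inr hcycle

theorem exists_odd_isCycle_of_odd_length {u : V} (p : G.Walk u u) (hp : Odd p.length) :
    ∃ (x : V) (c : G.Walk x x), c.IsCycle ∧ Odd c.length := by
  classical
  obtain ⟨q, hq, hpar⟩ | hcycle := p.exists_isPath_parity_or_exists_odd_isCycle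
  · rw [length_eq_zero_iff.mpr (isPath_iff_nil.mp hq)] at hpar
    exact absurd (hpar.mp Even.zero) (Nat.not_even_iff_odd.mpr hp)
  · exact hcycle

theorem IsCycle.card_toFinset_support [DecidableEq V] {u : V} {c : G.Walk u u} (hc : c.IsCycle) :
    c.support.toFinset.card = c.length := by
  have : c.support.toFinset = c.support.tail.toFinset := by
    conv_lhs => rw [← cons_tail_support]
    rw [List.toFinset_cons, Finset.insert_eq_of_mem]
    exact List.mem_toFinset.mpr (end_mem_tail_support hc.not_nil)
  rw [this, List.toFinset_card_of_nodup hc.support_nodup, List.length_tail, length_support]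
  simp

end Walk

theorem colorable_two_of_forall_isCycle_even
    (h : ∀ (x : V) (c : G.Walk x x), c.IsCycle → Even c.length) : G.Colorable 2 := by
  refine two_colorable_iff_forall_loop_even.mpr fun u p => ?_
  by_contra hp
  obtain ⟨x, c, hc, hodd⟩ := p.exists_odd_isCycle_of_odd_length (Nat.not_even_iff_odd.mp hp)
  exact Nat.not_even_iff_odd.mpr hodd (h x c hc)

theorem neighborSet_eq_of_ncard_eq_three {v a b y : V}
    (h3 : (G.neighborSet v).ncard = 3) (ha : G.Adj v a) (hb : G.Adj v b) (hy : G.Adj v y)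
    (hab : a ≠ b) (hay : a ≠ y) (hby : b ≠ y) : G.neighborSet v = {a, b, y} := by
  refine (Set.eq_of_subset_of_ncard_le ?_ ?_ (Set.finite_of_ncard_ne_zero (by omega))).symm
  · rintro z (rfl | rfl | rfl) <;> assumption
  · rw [h3, Set.ncard_eq_three.mpr ⟨a, b, y, hab, hay, hby, rfl⟩]

theorem Subgraph.mem_edgeSet_of_neighborSet_subset {M : G.Subgraph} {v a b y : V}
    (hv : v ∈ M.support) (hN : G.neighborSet v ⊆ {a, b, y})
    (ha : s(v, a) ∉ M.edgeSet) (hb : s(v, b) ∉ M.edgeSet) : s(v, y) ∈ M.edgeSet := by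
  obtain ⟨w, hw⟩ := hv
  rcases hN hw.adj_sub with rfl | rfl | rfl
  exacts [absurd hw ha, absurd hw hb, hw]

end SimpleGraph

theorem edgeBoundary_toFinset_support_subset_edgeSet {V : Type*} [DecidableEq V]
    {G H : SimpleGraph V} (hcubic : IsCubic G) (hHG : H ≤ G)
    {M : G.Subgraph} (hM : M.IsPerfectMatching) (hMH : Disjoint M.edgeSet H.edgeSet)
    {x : V} {c : H.Walk x x} (hc : c.IsCycle) :
    edgeBoundary G ↑c.support.toFinset ⊆ M.edgeSet := by
  rintro _ ⟨he, v, y, rfl, hv, hy⟩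
  simp only [Finset.mem_coe, List.mem_toFinset] at hv hy
  obtain ⟨a, b, hab, hnbr⟩ := Set.ncard_eq_two.mp (hc.ncard_neighborSet_toSubgraph_eq_two hv)
  have hca : c.toSubgraph.Adj v a := by simp [← Subgraph.mem_neighborSet, hnbr]
  have hcb : c.toSubgraph.Adj v b := by simp [← Subgraph.mem_neighborSet, hnbr]
  have hHa : H.Adj v a := hca.adj_sub
  have hHb : H.Adj v b := hcb.adj_sub
  have hay : a ≠ y := by rintro rfl; exact hy (Walk.mem_support_of_adj_toSubgraph hca.symm)
  have hby : b ≠ y := by rintro rfl; exact hy (Walk.mem_support_of_adj_toSubgraph hcb.symm)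
  have hN := neighborSet_eq_of_ncard_eq_three (hcubic v) (hHG hHa) (hHG hHb) he hab hay hby
  exact M.mem_edgeSet_of_neighborSet_subset (hM.1 (hM.2 v)).exists hN.subset
    (hMH.notMem_of_mem_right hHa) (hMH.notMem_of_mem_right hHb)

theorem stmt_5_general {V : Type*} (G : SimpleGraph V)
    (hcubic : IsCubic G)
    (M1 M2 : G.Subgraph)
    (h1 : M1.IsPerfectMatching) (h2 : M2.IsPerfectMatching)
    (hNoOddCut : ∀ W : Finset V, Odd W.card →
      ¬ (edgeBoundary G (W : Set V) ⊆ M1.edgeSet ∩ M2.edgeSet)) :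
    (G.deleteEdges (M1.edgeSet ∪ M2.edgeSet)).Colorable 2 := by
  classical
  refine colorable_two_of_forall_isCycle_even fun x c hc => ?_
  by_contra hodd
  have hdisj : ∀ M ⊆ M1.edgeSet ∪ M2.edgeSet,
      Disjoint M (G.deleteEdges (M1.edgeSet ∪ M2.edgeSet)).edgeSet := fun M hM => by
    rw [edgeSet_deleteEdges]
    exact Set.disjoint_sdiff_right.mono_left hM
  refine hNoOddCut c.support.toFinset ?_ fun e he => ⟨?_, ?_⟩
  · rw [hc.card_toFinset_support]
    exact Nat.not_even_iff_odd.mp hodd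
  · exact edgeBoundary_toFinset_support_subset_edgeSet hcubic (deleteEdges_le _) h1
      (hdisj _ Set.subset_union_left) hc he
  · exact edgeBoundary_toFinset_support_subset_edgeSet hcubic (deleteEdges_le _) h2
      (hdisj _ Set.subset_union_right) hc he

/-- If two perfect matchings of a bridgeless cubic graph have no odd cut in their
intersection, then the complement of their union is bipartite. -/
theorem stmt_5 {V : Type*} [Fintype V] (G : SimpleGraph V)
    (hcubic : IsCubic G) (hbridgeless : Bridgeless G)
    (M1 M2 : G.Subgraph)
    (h1 : M1.IsPerfectMatching) (h2 : M2.IsPerfectMatching)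
    (hNoOddCut : ∀ W : Finset V, Odd W.card →
      ¬ (edgeBoundary G (W : Set V) ⊆ M1.edgeSet ∩ M2.edgeSet)) :
    (G.deleteEdges (M1.edgeSet ∪ M2.edgeSet)).Colorable 2 :=
  stmt_5_general G hcubic M1 M2 h1 h2 hNoOddCut
end

section
/- Let G be a bridgeless cubic graph. Then G admits an S4-colouring if and only if G has two perfect matchings M1, M2 such that the complement of M1 ∪ M2 is bipartite. -/
/-!
In a cubic graph every vertex sees each colour of its star exactly once, and each star of `S₄`
contains exactly one of `g0, g3` and one of `g0, g4`; so the colour classes `{g0, g3}` and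
`{g0, g4}` of an `S₄`-colouring are perfect matchings `M1, M2`, and the remaining edges are
properly coloured by `g1, g2`. Conversely, colouring `M1 ∩ M2` by `g0`, `M1 \ M2` by `g3`,
`M2 \ M1` by `g4` and the rest by `g1, g2` is an `S₄`-colouring as soon as the rest has a proper
2-edge-colouring. Both directions therefore come down to comparing proper 2-edge-colourings and
proper 2-vertex-colourings of the complement `K` of `M1 ∪ M2`, a graph of maximum degree 2:

* colours alternate along a cycle, so a proper 2-edge-colouring leaves no odd closed walk;
* if `K` is bipartite, giving two adjacent edges the colour of their common vertex is a proper
  2-edge-colouring of the line graph of `K`, which by the first point is then bipartite, i.e. `K`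
  has a proper 2-edge-colouring.
-/

open SimpleGraph

/-- The stars of the three vertices of the multigraph `S₄`, whose five edges are
labelled `g0, g1, g2, g3, g4` (identified with `0, 1, 2, 3, 4 : Fin 5`):
the star of `x` is `{g1, g3, g4}`, the star of `y` is `{g2, g3, g4}` and the star
of `z` is `{g0, g1, g2}`. -/
def S4Star : Fin 3 → Set (Fin 5) :=
  ![{1, 3, 4}, {2, 3, 4}, {0, 1, 2}]

/-- An `S₄`-colouring of `G`: a proper edge-colouring of `G` by the five edges of the
multigraph `S₄` such that the colours of the edges at each vertex of `G` all lie in the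
star of a single vertex of `S₄`. -/
def HasS4Coloring {V : Type*} (G : SimpleGraph V) : Prop :=
  ∃ f : Sym2 V → Fin 5,
    (∀ e₁ ∈ G.edgeSet, ∀ e₂ ∈ G.edgeSet, e₁ ≠ e₂ → (∃ x : V, x ∈ e₁ ∧ x ∈ e₂) →
      f e₁ ≠ f e₂) ∧
    (∀ u : V, ∃ i : Fin 3, ∀ e ∈ G.edgeSet, u ∈ e → f e ∈ S4Star i)

lemma Sym2.eq_of_mem_of_mem {α : Type*} {x y : α} {e f : Sym2 α} (hef : e ≠ f) (hxe : x ∈ e)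
    (hxf : x ∈ f) (hye : y ∈ e) (hyf : y ∈ f) : x = y := by
  by_contra hxy
  exact hef (Sym2.eq_of_ne_mem hxy hxe hye hxf hyf)

namespace SimpleGraph

variable {V : Type*} {G : SimpleGraph V}

def IsProperEdgeColoring {α : Type*} (G : SimpleGraph V) (g : Sym2 V → α) : Prop :=
  ∀ ⦃x y z⦄, G.Adj x y → G.Adj x z → y ≠ z → g s(x, y) ≠ g s(x, z)

namespace Walk

lemma exists_loop_of_not_isPath [DecidableEq V] {u v : V} :
    ∀ (p : G.Walk u v), ¬p.IsPath →
      ∃ (x : V) (r : G.Walk x x) (q : G.Walk u v), ¬r.Nil ∧ p.length = q.length + r.length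
  | nil, hp => absurd IsPath.nil hp
  | cons h p, hp => by
    by_cases hu : u ∈ p.support
    · refine ⟨u, cons h (p.takeUntil u hu), p.dropUntil u hu, not_nil_cons, ?_⟩
      have := congrArg length (p.take_spec hu)
      rw [length_append] at this
      rw [length_cons, length_cons]
      lia
    · obtain ⟨x, r, q, hr, hlen⟩ :=
        exists_loop_of_not_isPath p fun hp' => hp (hp'.cons hu)
      exact ⟨x, r, cons h q, hr, by simp [hlen]; lia⟩

end Walk

namespace IsProperEdgeColoring

variable {g : Sym2 V → Bool}

lemma color_eq_penultimate_iff (hg : G.IsProperEdgeColoring g) {w v b : V} (h : G.Adj w v) :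
    ∀ (p : G.Walk v b), (Walk.cons h p).IsTrail →
      (g s(w, v) = g s((Walk.cons h p).penultimate, b) ↔ Even p.length)
  | .nil, _ => by simp [Walk.penultimate_cons_nil]
  | @Walk.cons _ _ _ y _ h' p, hp => by
    have hwy : w ≠ y := by
      rintro rfl
      simp [Walk.isTrail_cons, Sym2.eq_swap] at hp
    have hflip := hg h.symm h' hwy
    rw [Walk.penultimate_cons_cons, Walk.length_cons, Nat.even_add_one,
      ← color_eq_penultimate_iff hg h' p hp.of_cons, Sym2.eq_swap]
    revert hflip
    cases g s(v, w) <;> cases g s(v, y) <;> cases g s((Walk.cons h' p).penultimate, b) <;> simp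

lemma even_length_of_isCircuit (hg : G.IsProperEdgeColoring g) {u : V} {c : G.Walk u u}
    (hc : c.IsCircuit) : Even c.length := by
  cases c with
  | nil => exact ⟨0, rfl⟩
  | @cons _ v _ h p =>
    have hp : ¬p.Nil := fun hp => h.ne hp.eq.symm
    have hlast := p.mk_penultimate_end_mem_edges hp
    have hne : v ≠ p.penultimate := by
      rintro hv
      rw [← hv] at hlast
      exact ((Walk.isTrail_cons h p).mp hc.isTrail).2 (Sym2.eq_swap ▸ hlast)
    have hflip := hg h (Walk.adj_penultimate hp).symm hne
    have key := hg.color_eq_penultimate_iff h p hc.isTrail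
    rw [Walk.penultimate_cons_of_not_nil h p hp, Sym2.eq_swap (a := p.penultimate)] at key
    rw [Walk.length_cons, Nat.even_add_one, ← key]
    exact hflip

theorem even_length (hg : G.IsProperEdgeColoring g) {u : V} (c : G.Walk u u) :
    Even c.length := by
  classical
  -- A closed walk that is not a cycle has length at most 2 or splits at a repeated vertex into
  -- two shorter closed walks.
  induction hn : c.length using Nat.strong_induction_on generalizing u with
  | _ n ih =>
  subst hn
  by_cases hc : c.IsCycle
  · exact hg.even_length_of_isCircuit hc.isCircuit
  rw [Walk.isCycle_iff_isPath_tail_and_le_length, not_and_or, not_le] at hc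
  cases c with
  | nil => exact ⟨0, rfl⟩
  | cons h p =>
    rcases hc with hp | hlen
    · simp only [Walk.getVert_cons_succ, Walk.tail_cons, Walk.isPath_copy] at hp
      obtain ⟨x, r, q, hr, hlen⟩ := p.exists_loop_of_not_isPath hp
      have := Walk.not_nil_iff_lt_length.mp hr
      have hr' := ih _ (by rw [Walk.length_cons, Walk.length_cons, hlen]; lia) (Walk.cons h q) rfl
      have hq' := ih _ (by rw [Walk.length_cons, hlen]; lia) r rfl
      rw [Walk.length_cons, hlen, add_right_comm]
      exact hr'.add hq'
    · have hp : ¬p.Nil := fun hp => h.ne hp.eq.symm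
      have := Walk.not_nil_iff_lt_length.mp hp
      rw [Walk.length_cons] at hlen ⊢
      exact ⟨1, by lia⟩

theorem colorable_two (hg : G.IsProperEdgeColoring g) : G.Colorable 2 :=
  two_colorable_iff_forall_loop_even.mpr fun _ => hg.even_length

end IsProperEdgeColoring

lemma eq_or_eq_or_eq_of_adj (hdeg : ∀ v, (G.neighborSet v).encard ≤ 2) {x a b c : V}
    (ha : G.Adj x a) (hb : G.Adj x b) (hc : G.Adj x c) : a = b ∨ a = c ∨ b = c := by
  by_contra! hne
  obtain ⟨hab, hac, hbc⟩ := hne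
  have h3 : ({a, b, c} : Set V).encard = 3 := by
    rw [Set.encard_insert_of_notMem (by simp [hab, hac]), Set.encard_pair hbc]
    rfl
  have := (Set.encard_le_encard (s := {a, b, c}) (t := G.neighborSet x)
    (by simp [Set.insert_subset_iff, ha, hb, hc])).trans (hdeg x)
  rw [h3] at this
  exact absurd this (by decide)

lemma eq_or_eq_or_eq_of_mem_edgeSet (hdeg : ∀ v, (G.neighborSet v).encard ≤ 2) {x : V}
    {e₁ e₂ e₃ : Sym2 V} (h₁ : e₁ ∈ G.edgeSet) (h₂ : e₂ ∈ G.edgeSet) (h₃ : e₃ ∈ G.edgeSet)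
    (hx₁ : x ∈ e₁) (hx₂ : x ∈ e₂) (hx₃ : x ∈ e₃) : e₁ = e₂ ∨ e₁ = e₃ ∨ e₂ = e₃ := by
  obtain ⟨a, rfl⟩ : ∃ a, s(x, a) = e₁ := ⟨_, Sym2.other_spec hx₁⟩
  obtain ⟨b, rfl⟩ : ∃ b, s(x, b) = e₂ := ⟨_, Sym2.other_spec hx₂⟩
  obtain ⟨c, rfl⟩ : ∃ c, s(x, c) = e₃ := ⟨_, Sym2.other_spec hx₃⟩
  rcases eq_or_eq_or_eq_of_adj hdeg h₁ h₂ h₃ with rfl | rfl | rfl <;> simp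

open Classical in
noncomputable def commonVertexColoring (G : SimpleGraph V) (C : V → Bool) :
    Sym2 G.edgeSet → Bool :=
  Sym2.lift ⟨fun e f => decide (∃ x, x ∈ (e : Sym2 V) ∧ x ∈ (f : Sym2 V) ∧ C x = true),
    fun e f => by simp only [and_left_comm]⟩

lemma commonVertexColoring_mk {C : V → Bool} {e f : G.edgeSet} {x : V} (hef : e ≠ f)
    (hxe : x ∈ (e : Sym2 V)) (hxf : x ∈ (f : Sym2 V)) : G.commonVertexColoring C s(e, f) = C x := by
  classical
  have hef' : (e : Sym2 V) ≠ f := fun h => hef (Subtype.ext h)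
  simp only [commonVertexColoring, Sym2.lift_mk]
  cases hCx : C x
  · simp only [decide_eq_false_iff_not, not_exists, not_and]
    intro y hye hyf
    rw [← Sym2.eq_of_mem_of_mem hef' hxe hxf hye hyf, hCx]
    simp
  · exact decide_eq_true ⟨x, hxe, hxf, hCx⟩

lemma isProperEdgeColoring_commonVertexColoring (C : G.Coloring Bool)
    (hdeg : ∀ v, (G.neighborSet v).encard ≤ 2) :
    G.lineGraph.IsProperEdgeColoring (G.commonVertexColoring C) := by
  intro e f₁ f₂ h₁ h₂ hf
  obtain ⟨he₁, x₁, hx₁e, hx₁f⟩ := lineGraph_adj_iff_exists.mp h₁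
  obtain ⟨he₂, x₂, hx₂e, hx₂f⟩ := lineGraph_adj_iff_exists.mp h₂
  rw [commonVertexColoring_mk he₁ hx₁e hx₁f, commonVertexColoring_mk he₂ hx₂e hx₂f]
  by_cases hx : x₁ = x₂
  · subst hx
    rcases eq_or_eq_or_eq_of_mem_edgeSet hdeg e.2 f₁.2 f₂.2 hx₁e hx₁f hx₂f with h | h | h
    · exact absurd (Subtype.ext h) he₁
    · exact absurd (Subtype.ext h) he₂
    · exact absurd (Subtype.ext h) hf
  · apply C.valid
    rw [← mem_edgeSet, ← (Sym2.mem_and_mem_iff hx).mp ⟨hx₁e, hx₂e⟩]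
    exact e.2

lemma exists_isProperEdgeColoring_of_colorable_lineGraph (h : G.lineGraph.Colorable 2) :
    ∃ g : Sym2 V → Bool, G.IsProperEdgeColoring g := by
  classical
  let c : G.lineGraph.Coloring Bool := h.toColoring (by simp)
  refine ⟨fun e => if he : e ∈ G.edgeSet then c ⟨e, he⟩ else false, fun x y z hy hz hyz => ?_⟩
  dsimp only
  rw [dif_pos (show s(x, y) ∈ G.edgeSet from hy), dif_pos (show s(x, z) ∈ G.edgeSet from hz)]
  refine c.valid (lineGraph_adj_iff_exists.mpr ⟨fun h => hyz ?_, x, Sym2.mem_mk_left _ _,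
    Sym2.mem_mk_left _ _⟩)
  exact Sym2.congr_right.mp (congrArg Subtype.val h)

theorem Colorable.exists_isProperEdgeColoring (hG : G.Colorable 2)
    (hdeg : ∀ v, (G.neighborSet v).encard ≤ 2) :
    ∃ g : Sym2 V → Bool, G.IsProperEdgeColoring g :=
  exists_isProperEdgeColoring_of_colorable_lineGraph
    (isProperEdgeColoring_commonVertexColoring (hG.toColoring (by simp)) hdeg).colorable_two

section Coloring

variable {α : Type*} {f : Sym2 V → α}

lemma isProperEdgeColoring_iff : G.IsProperEdgeColoring f ↔
    ∀ e₁ ∈ G.edgeSet, ∀ e₂ ∈ G.edgeSet, e₁ ≠ e₂ → (∃ x : V, x ∈ e₁ ∧ x ∈ e₂) → f e₁ ≠ f e₂ := by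
  refine ⟨fun hf e₁ h₁ e₂ h₂ hne ⟨x, hx₁, hx₂⟩ => ?_, fun hf x y z hy hz hyz => ?_⟩
  · obtain ⟨a, rfl⟩ : ∃ a, s(x, a) = e₁ := ⟨_, Sym2.other_spec hx₁⟩
    obtain ⟨b, rfl⟩ : ∃ b, s(x, b) = e₂ := ⟨_, Sym2.other_spec hx₂⟩
    exact hf h₁ h₂ fun hab => hne (by rw [hab])
  · exact hf _ hy _ hz (fun h => hyz (Sym2.congr_right.mp h))
      ⟨x, Sym2.mem_mk_left _ _, Sym2.mem_mk_left _ _⟩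

lemma forall_mem_edgeSet_mem_iff {P : Sym2 V → Prop} {u : V} :
    (∀ e ∈ G.edgeSet, u ∈ e → P e) ↔ ∀ w, G.Adj u w → P s(u, w) := by
  refine ⟨fun h w hw => h _ hw (Sym2.mem_mk_left _ _), fun h e he hu => ?_⟩
  rw [← Sym2.other_spec hu] at he ⊢
  exact h _ he

lemma IsProperEdgeColoring.surjOn (hf : G.IsProperEdgeColoring f) {u : V} {S : Set α}
    (hu : (G.neighborSet u).Finite) (hmaps : Set.MapsTo (fun w => f s(u, w)) (G.neighborSet u) S)
    (hS : S.encard ≤ (G.neighborSet u).encard) :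
    Set.SurjOn (fun w => f s(u, w)) (G.neighborSet u) S := by
  have hinj : Set.InjOn (fun w => f s(u, w)) (G.neighborSet u) :=
    fun w hw w' hw' h => by_contra fun hne => hf hw hw' hne h
  refine ((hu.image _).eq_of_subset_of_encard_le hmaps.image_subset ?_).ge
  rwa [hinj.encard_image]

def edgesColoredIn (G : SimpleGraph V) (f : Sym2 V → α) (T : Set α) : G.Subgraph where
  verts := Set.univ
  Adj a b := G.Adj a b ∧ f s(a, b) ∈ T
  adj_sub h := h.1
  edge_vert _ := trivial
  symm := ⟨fun _ _ h => ⟨h.1.symm, Sym2.eq_swap ▸ h.2⟩⟩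

@[simp]
lemma edgesColoredIn_adj {T : Set α} {a b : V} :
    (G.edgesColoredIn f T).Adj a b ↔ G.Adj a b ∧ f s(a, b) ∈ T := Iff.rfl

lemma IsProperEdgeColoring.isPerfectMatching_edgesColoredIn (hf : G.IsProperEdgeColoring f)
    {S : V → Set α} (hmaps : ∀ u, Set.MapsTo (fun w => f s(u, w)) (G.neighborSet u) (S u))
    (hsurj : ∀ u, Set.SurjOn (fun w => f s(u, w)) (G.neighborSet u) (S u))
    {T : Set α} (hT : ∀ u, ∃ t, S u ∩ T = {t}) : (G.edgesColoredIn f T).IsPerfectMatching := by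
  refine Subgraph.isPerfectMatching_iff.mpr fun u => ?_
  obtain ⟨t, ht⟩ := hT u
  have htT : t ∈ S u ∩ T := ht ▸ rfl
  obtain ⟨w, hw, hfw : f s(u, w) = t⟩ := hsurj u htT.1
  simp only [edgesColoredIn_adj]
  refine ⟨w, ⟨hw, hfw ▸ htT.2⟩, fun w' ⟨hw', hfw'⟩ => by_contra fun hne => ?_⟩
  have hft : f s(u, w') = t := by
    rw [← Set.mem_singleton_iff, ← ht]
    exact ⟨hmaps u hw', hfw'⟩
  exact hf hw' hw hne (hft.trans hfw.symm)

end Coloring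

lemma Subgraph.IsMatching.mk_mem_edgeSet_iff {M : G.Subgraph} (hM : M.IsMatching) {u w₀ w : V}
    (h : M.Adj u w₀) : s(u, w) ∈ M.edgeSet ↔ w = w₀ :=
  ⟨fun hw => hM.eq_of_adj_left hw h, fun hw => hw ▸ h⟩

end SimpleGraph

section S4

variable {V : Type*} {G : SimpleGraph V}

lemma IsCubic.encard_neighborSet (hG : IsCubic G) (v : V) : (G.neighborSet v).encard = 3 := by
  rw [← (Set.finite_of_ncard_pos (by rw [hG v]; norm_num)).cast_ncard_eq, hG v]
  rfl

lemma IsCubic.finite_neighborSet (hG : IsCubic G) (v : V) : (G.neighborSet v).Finite :=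
  Set.finite_of_encard_eq_coe (hG.encard_neighborSet v)

lemma S4Star_encard (i : Fin 3) : (S4Star i).encard = 3 := by
  fin_cases i <;> simp [S4Star, Set.encard_insert_of_notMem] <;> rfl

lemma S4Star_inter_zero_three_eq_singleton (i : Fin 3) : ∃ t, S4Star i ∩ {0, 3} = {t} := by
  fin_cases i
  · exact ⟨3, by ext t; fin_cases t <;> simp [S4Star]⟩
  · exact ⟨3, by ext t; fin_cases t <;> simp [S4Star]⟩
  · exact ⟨0, by ext t; fin_cases t <;> simp [S4Star]⟩

lemma S4Star_inter_zero_four_eq_singleton (i : Fin 3) : ∃ t, S4Star i ∩ {0, 4} = {t} := by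
  fin_cases i
  · exact ⟨4, by ext t; fin_cases t <;> simp [S4Star]⟩
  · exact ⟨4, by ext t; fin_cases t <;> simp [S4Star]⟩
  · exact ⟨0, by ext t; fin_cases t <;> simp [S4Star]⟩

lemma hasS4Coloring_iff : HasS4Coloring G ↔ ∃ f : Sym2 V → Fin 5, G.IsProperEdgeColoring f ∧
    ∀ u, ∃ i, ∀ w, G.Adj u w → f s(u, w) ∈ S4Star i := by
  simp only [HasS4Coloring, isProperEdgeColoring_iff, forall_mem_edgeSet_mem_iff]

theorem HasS4Coloring.exists_isPerfectMatching (hG : IsCubic G) (h : HasS4Coloring G) :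
    ∃ M1 M2 : G.Subgraph, M1.IsPerfectMatching ∧ M2.IsPerfectMatching ∧
      (G.deleteEdges (M1.edgeSet ∪ M2.edgeSet)).Colorable 2 := by
  obtain ⟨f, hf, hstar⟩ := hasS4Coloring_iff.mp h
  choose i hi using hstar
  have hmaps : ∀ u, Set.MapsTo (fun w => f s(u, w)) (G.neighborSet u) (S4Star (i u)) :=
    fun u w hw => hi u w hw
  have hsurj : ∀ u, Set.SurjOn (fun w => f s(u, w)) (G.neighborSet u) (S4Star (i u)) :=
    fun u => hf.surjOn (hG.finite_neighborSet u) (hmaps u)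
      (by rw [S4Star_encard, hG.encard_neighborSet])
  refine ⟨G.edgesColoredIn f {0, 3}, G.edgesColoredIn f {0, 4},
    hf.isPerfectMatching_edgesColoredIn hmaps hsurj fun u => S4Star_inter_zero_three_eq_singleton _,
    hf.isPerfectMatching_edgesColoredIn hmaps hsurj fun u => S4Star_inter_zero_four_eq_singleton _,
    IsProperEdgeColoring.colorable_two (g := fun e => decide (f e = 2)) ?_⟩
  have h12 : ∀ t : Fin 5, t ∉ ({0, 3} : Set (Fin 5)) → t ∉ ({0, 4} : Set (Fin 5)) →
      t = 1 ∨ t = 2 := by decide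
  intro x y z hy hz hyz
  simp only [deleteEdges_adj, Set.mem_union, Subgraph.mem_edgeSet, edgesColoredIn_adj,
    not_or, not_and] at hy hz
  have hne := hf hy.1 hz.1 hyz
  rcases h12 _ (hy.2.1 hy.1) (hy.2.2 hy.1) with hy' | hy' <;>
    rcases h12 _ (hz.2.1 hz.1) (hz.2.2 hz.1) with hz' | hz' <;> simp_all

lemma IsCubic.encard_neighborSet_deleteEdges_add_le (hG : IsCubic G) {M1 M2 : G.Subgraph}
    {u w₁ w₂ : V} (h₁ : M1.Adj u w₁) (h₂ : M2.Adj u w₂) :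
    ((G.deleteEdges (M1.edgeSet ∪ M2.edgeSet)).neighborSet u).encard +
      ({w₁, w₂} : Set V).encard ≤ 3 := by
  have hsub : ({w₁, w₂} : Set V) ⊆ G.neighborSet u := by
    simp [Set.insert_subset_iff, h₁.adj_sub, h₂.adj_sub]
  rw [← hG.encard_neighborSet u, ← Set.encard_sdiff_add_encard_of_subset hsub]
  gcongr
  intro w hw
  rw [mem_neighborSet, deleteEdges_adj] at hw
  refine ⟨hw.1, ?_⟩
  rintro (rfl | rfl)
  · exact hw.2 (Or.inl h₁)
  · exact hw.2 (Or.inr h₂)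

lemma IsCubic.encard_neighborSet_deleteEdges_le (hG : IsCubic G) {M1 M2 : G.Subgraph}
    (hM1 : M1.IsPerfectMatching) (hM2 : M2.IsPerfectMatching) (u : V) :
    ((G.deleteEdges (M1.edgeSet ∪ M2.edgeSet)).neighborSet u).encard ≤ 2 := by
  obtain ⟨w₁, h₁⟩ := (Subgraph.isPerfectMatching_iff.mp hM1 u).exists
  obtain ⟨w₂, h₂⟩ := (Subgraph.isPerfectMatching_iff.mp hM2 u).exists
  have hdeg := (add_le_add_right (Set.one_le_encard_iff_nonempty.mpr (Set.insert_nonempty _ _))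
    _).trans (hG.encard_neighborSet_deleteEdges_add_le h₁ h₂)
  generalize ((G.deleteEdges (M1.edgeSet ∪ M2.edgeSet)).neighborSet u).encard = d at hdeg ⊢
  enat_to_nat
  omega

open Classical in
noncomputable def s4ColoringOfMatchings (M1 M2 : G.Subgraph) (g : Sym2 V → Bool)
    (e : Sym2 V) : Fin 5 :=
  if e ∈ M1.edgeSet then if e ∈ M2.edgeSet then 0 else 3
  else if e ∈ M2.edgeSet then 4 else if g e then 2 else 1

section s4ColoringOfMatchings

variable {M1 M2 : G.Subgraph} {g : Sym2 V → Bool} {e : Sym2 V}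

lemma s4ColoringOfMatchings_mem_left_iff :
    s4ColoringOfMatchings M1 M2 g e ∈ ({0, 3} : Set (Fin 5)) ↔ e ∈ M1.edgeSet := by
  unfold s4ColoringOfMatchings
  split_ifs <;> simp_all

lemma s4ColoringOfMatchings_mem_right_iff :
    s4ColoringOfMatchings M1 M2 g e ∈ ({0, 4} : Set (Fin 5)) ↔ e ∈ M2.edgeSet := by
  unfold s4ColoringOfMatchings
  split_ifs <;> simp_all

lemma s4ColoringOfMatchings_of_notMem (h₁ : e ∉ M1.edgeSet) (h₂ : e ∉ M2.edgeSet) :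
    s4ColoringOfMatchings M1 M2 g e = if g e then 2 else 1 := by
  simp [s4ColoringOfMatchings, h₁, h₂]

lemma isProperEdgeColoring_s4ColoringOfMatchings (hM1 : M1.IsMatching) (hM2 : M2.IsMatching)
    (hg : (G.deleteEdges (M1.edgeSet ∪ M2.edgeSet)).IsProperEdgeColoring g) :
    G.IsProperEdgeColoring (s4ColoringOfMatchings M1 M2 g) := by
  intro x y z hy hz hyz hf
  have h₁ : s(x, y) ∈ M1.edgeSet ↔ s(x, z) ∈ M1.edgeSet := by
    rw [← s4ColoringOfMatchings_mem_left_iff, hf, s4ColoringOfMatchings_mem_left_iff]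
  have h₂ : s(x, y) ∈ M2.edgeSet ↔ s(x, z) ∈ M2.edgeSet := by
    rw [← s4ColoringOfMatchings_mem_right_iff, hf, s4ColoringOfMatchings_mem_right_iff]
  by_cases hy₁ : s(x, y) ∈ M1.edgeSet
  · exact hyz (hM1.eq_of_adj_left hy₁ (h₁.mp hy₁))
  by_cases hy₂ : s(x, y) ∈ M2.edgeSet
  · exact hyz (hM2.eq_of_adj_left hy₂ (h₂.mp hy₂))
  have hz₁ := h₁.not.mp hy₁
  have hz₂ := h₂.not.mp hy₂
  have hgne := hg ((deleteEdges_adj ..).mpr ⟨hy, fun h => h.elim hy₁ hy₂⟩)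
    ((deleteEdges_adj ..).mpr ⟨hz, fun h => h.elim hz₁ hz₂⟩) hyz
  rw [s4ColoringOfMatchings_of_notMem hy₁ hy₂, s4ColoringOfMatchings_of_notMem hz₁ hz₂] at hf
  revert hf hgne
  cases g s(x, y) <;> cases g s(x, z) <;> simp

lemma s4ColoringOfMatchings_mem_S4Star_two (hM1 : M1.IsMatching) (hM2 : M2.IsMatching)
    {u w₀ : V} (h₁ : M1.Adj u w₀) (h₂ : M2.Adj u w₀) (w : V) :
    s4ColoringOfMatchings M1 M2 g s(u, w) ∈ S4Star 2 := by
  by_cases hw : w = w₀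
  · simp [s4ColoringOfMatchings, hM1.mk_mem_edgeSet_iff h₁, hM2.mk_mem_edgeSet_iff h₂, hw, S4Star]
  · rw [s4ColoringOfMatchings_of_notMem ((hM1.mk_mem_edgeSet_iff h₁).not.mpr hw)
      ((hM2.mk_mem_edgeSet_iff h₂).not.mpr hw)]
    split_ifs <;> simp [S4Star]

lemma exists_s4ColoringOfMatchings_mem_S4Star_of_ne (hG : IsCubic G) (hM1 : M1.IsMatching)
    (hM2 : M2.IsMatching) {u w₁ w₂ : V} (h₁ : M1.Adj u w₁) (h₂ : M2.Adj u w₂) (h12 : w₁ ≠ w₂) :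
    ∃ i, ∀ w, G.Adj u w → s4ColoringOfMatchings M1 M2 g s(u, w) ∈ S4Star i := by
  classical
  have hM1u := fun {w} => hM1.mk_mem_edgeSet_iff (w := w) h₁
  have hM2u := fun {w} => hM2.mk_mem_edgeSet_iff (w := w) h₂
  set K := G.deleteEdges (M1.edgeSet ∪ M2.edgeSet)
  have hK : (K.neighborSet u).Subsingleton := by
    have hdeg := hG.encard_neighborSet_deleteEdges_add_le h₁ h₂
    rw [← Set.encard_le_one_iff_subsingleton]
    rw [Set.encard_pair h12] at hdeg
    generalize (K.neighborSet u).encard = d at hdeg ⊢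
    enat_to_nat
    omega
  refine ⟨if ∃ w, K.Adj u w ∧ g s(u, w) then 1 else 0, fun w hw => ?_⟩
  by_cases hw₁ : w = w₁
  · simp only [s4ColoringOfMatchings, hM1u, hM2u, hw₁, h12, if_true, if_false]
    split_ifs <;> simp [S4Star]
  by_cases hw₂ : w = w₂
  · simp only [s4ColoringOfMatchings, hM1u, hM2u, hw₂, Ne.symm h12, if_true, if_false]
    split_ifs <;> simp [S4Star]
  have hKw : K.Adj u w :=
    (deleteEdges_adj ..).mpr ⟨hw, fun h => h.elim (hM1u.not.mpr hw₁) (hM2u.not.mpr hw₂)⟩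
  rw [s4ColoringOfMatchings_of_notMem (hM1u.not.mpr hw₁) (hM2u.not.mpr hw₂)]
  cases hgw : g s(u, w)
  · rw [if_neg fun ⟨w', hw', hgw'⟩ => by rw [hK hw' hKw, hgw] at hgw'; cases hgw']
    simp [S4Star]
  · rw [if_pos ⟨w, hKw, hgw⟩]
    simp [S4Star]

lemma exists_s4ColoringOfMatchings_mem_S4Star (hG : IsCubic G) (hM1 : M1.IsPerfectMatching)
    (hM2 : M2.IsPerfectMatching) (u : V) :
    ∃ i, ∀ w, G.Adj u w → s4ColoringOfMatchings M1 M2 g s(u, w) ∈ S4Star i := by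
  obtain ⟨w₁, h₁⟩ := (Subgraph.isPerfectMatching_iff.mp hM1 u).exists
  obtain ⟨w₂, h₂⟩ := (Subgraph.isPerfectMatching_iff.mp hM2 u).exists
  by_cases h12 : w₁ = w₂
  · exact ⟨2, fun w _ => s4ColoringOfMatchings_mem_S4Star_two hM1.1 hM2.1 h₁ (h12 ▸ h₂) w⟩
  · exact exists_s4ColoringOfMatchings_mem_S4Star_of_ne hG hM1.1 hM2.1 h₁ h₂ h12

end s4ColoringOfMatchings

theorem IsCubic.hasS4Coloring_of_isPerfectMatching (hG : IsCubic G) {M1 M2 : G.Subgraph}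
    (hM1 : M1.IsPerfectMatching) (hM2 : M2.IsPerfectMatching)
    (hK : (G.deleteEdges (M1.edgeSet ∪ M2.edgeSet)).Colorable 2) : HasS4Coloring G := by
  obtain ⟨g, hg⟩ := hK.exists_isProperEdgeColoring (hG.encard_neighborSet_deleteEdges_le hM1 hM2)
  exact hasS4Coloring_iff.mpr ⟨_, isProperEdgeColoring_s4ColoringOfMatchings hM1.1 hM2.1 hg,
    exists_s4ColoringOfMatchings_mem_S4Star hG hM1 hM2⟩

end S4

theorem stmt_7_general {V : Type*} (G : SimpleGraph V)
    (hcubic : IsCubic G) :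
    HasS4Coloring G ↔
      ∃ M1 M2 : G.Subgraph, M1.IsPerfectMatching ∧ M2.IsPerfectMatching ∧
        (G.deleteEdges (M1.edgeSet ∪ M2.edgeSet)).Colorable 2 :=
  ⟨HasS4Coloring.exists_isPerfectMatching hcubic,
    fun ⟨_, _, hM1, hM2, hK⟩ => hcubic.hasS4Coloring_of_isPerfectMatching hM1 hM2 hK⟩

/-- A bridgeless cubic graph admits an `S₄`-colouring iff it has two perfect matchings
whose union has bipartite complement (an `S₄`-pair). -/
theorem stmt_7 {V : Type*} [Fintype V] (G : SimpleGraph V)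
    (hcubic : IsCubic G) (hbridgeless : Bridgeless G) :
    HasS4Coloring G ↔
      ∃ M1 M2 : G.Subgraph, M1.IsPerfectMatching ∧ M2.IsPerfectMatching ∧
        (G.deleteEdges (M1.edgeSet ∪ M2.edgeSet)).Colorable 2 :=
  stmt_7_general G hcubic
end

section
/- The Petersen graph has no perfect matching whose complement is bipartite. -/
open SimpleGraph

/-- The Petersen graph as the Kneser graph `K(5,2)`: vertices are the 2-element
subsets of a 5-element set, adjacent iff disjoint. -/
def petersen : SimpleGraph {s : Finset (Fin 5) // s.card = 2} where
  Adj a b := Disjoint a.1 b.1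
  symm := ⟨fun a b h => h.symm⟩
  loopless := ⟨by
    intro a h
    have h2 := a.2
    rw [disjoint_self] at h
    simp [h] at h2⟩

/-!
If `M` is a perfect matching and `c` properly colours `G - M` with two colours, every edge of
`G` joining two vertices of the same colour lies in `M`. Hence no vertex has two neighbours of
its own colour, and the `M`-partner of a vertex with no neighbour of its own colour has none
either. A finite check shows that every 2-colouring of the Petersen graph violates one of these
two properties: the colourings with no vertex having two neighbours of its own colour are exactly
those colouring the four pairs through a fixed point differently from the other six, and there
the four pairs have no neighbour of their own colour while all their neighbours have one.
-/

namespace SimpleGraph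

variable {V β : Type*} {G : SimpleGraph V}

def NoSameColorNeighbor (G : SimpleGraph V) (c : V → β) (v : V) : Prop :=
  ∀ w, G.Adj v w → c w ≠ c v

instance [Fintype V] [DecidableRel G.Adj] [DecidableEq β] (c : V → β) (v : V) :
    Decidable (G.NoSameColorNeighbor c v) :=
  inferInstanceAs (Decidable (∀ w, G.Adj v w → c w ≠ c v))

namespace Subgraph

variable {M : G.Subgraph}

theorem adj_of_color_eq (C : (G.deleteEdges M.edgeSet).Coloring β) {v w : V}
    (h : G.Adj v w) (hc : C v = C w) : M.Adj v w := by
  by_contra hM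
  exact C.valid (SimpleGraph.deleteEdges_adj.mpr ⟨h, hM⟩) hc

theorem IsMatching.card_sameColor_neighborFinset_le_one [DecidableEq β] (hM : M.IsMatching)
    (C : (G.deleteEdges M.edgeSet).Coloring β) (v : V) [Fintype (G.neighborSet v)] :
    ((G.neighborFinset v).filter (fun w => C w = C v)).card ≤ 1 := by
  refine Finset.card_le_one.mpr fun w hw u hu => ?_
  simp only [Finset.mem_filter, mem_neighborFinset] at hw hu
  have hvw : M.Adj v w := adj_of_color_eq C hw.1 hw.2.symm
  have hvu : M.Adj v u := adj_of_color_eq C hu.1 hu.2.symm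
  exact (hM (M.edge_vert hvw)).unique hvw hvu

theorem IsPerfectMatching.exists_adj_noSameColorNeighbor (hM : M.IsPerfectMatching)
    (C : (G.deleteEdges M.edgeSet).Coloring β) {v : V} (hv : G.NoSameColorNeighbor C v) :
    ∃ w, G.Adj v w ∧ G.NoSameColorNeighbor C w := by
  obtain ⟨w, hvw, -⟩ := hM.1 (hM.2 v)
  refine ⟨w, M.adj_sub hvw, fun u hwu hc => ?_⟩
  obtain rfl : u = v :=
    (hM.1 (M.edge_vert hvw.symm)).unique (adj_of_color_eq C hwu hc.symm) hvw.symm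
  exact hv w (M.adj_sub hvw) hc.symm

end Subgraph

end SimpleGraph

instance : DecidableRel petersen.Adj := fun a b =>
  inferInstanceAs (Decidable (Disjoint a.1 b.1))

theorem petersen_two_coloring_obstruction (c : {s : Finset (Fin 5) // s.card = 2} → Fin 2) :
    (∃ v, 1 < ((petersen.neighborFinset v).filter (fun w => c w = c v)).card) ∨
      ∃ v, petersen.NoSameColorNeighbor c v ∧
        ∀ w, petersen.Adj v w → ¬ petersen.NoSameColorNeighbor c w := by
  revert c
  decide +kernel

/-- The Petersen graph has no perfect matching whose complement is bipartite. -/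
theorem stmt_10 :
    ¬ ∃ M : petersen.Subgraph, M.IsPerfectMatching ∧
      (petersen.deleteEdges M.edgeSet).Colorable 2 := by
  rintro ⟨M, hM, ⟨C⟩⟩
  rcases petersen_two_coloring_obstruction C with ⟨v, hv⟩ | ⟨v, hv, hnone⟩
  · exact (hM.1.card_sameColor_neighborFinset_le_one C v).not_gt hv
  · obtain ⟨w, hvw, hw⟩ := hM.exists_adj_noSameColorNeighbor C hv
    exact hnone w hvw hw
end

section
/- Let G be a bridgeless cubic graph, and let N be a perfect matching of G intersecting every 3-edge-cut of G in exactly one edge. Define w(e) = 1/5 if e ∈ N and w(e) = 2/5 otherwise. Then w is a fractional perfect matching of G. -/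
open SimpleGraph

/-- A fractional perfect matching: weights in `[0,1]`, total weight 1 at each
vertex, and total weight at least 1 on each odd cut. -/
def IsFractionalPerfectMatching {V : Type*} (G : SimpleGraph V) (w : Sym2 V → ℝ) : Prop :=
  (∀ e ∈ G.edgeSet, w e ∈ Set.Icc (0 : ℝ) 1) ∧
  (∀ v : V, ∑ᶠ e ∈ G.incidenceSet v, w e = 1) ∧
  (∀ W : Finset V, Odd W.card → 1 ≤ ∑ᶠ e ∈ edgeBoundary G (W : Set V), w e)

/-!
Each vertex star has three edges, exactly one of them in the perfect matching `N`, so its weight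
is `1/5 + 2 · 2/5 = 1`. For an odd set `W`, counting darts leaving `W` shows that `|∂W|` has the
parity of `3 |W|`, hence is odd; bridgelessness rules out `|∂W| = 1`, a 3-edge-cut has weight
`1/5 + 2 · 2/5` by the hypothesis on `N`, and a cut with at least five edges has weight at least
`5 · 1/5`.
-/

open Finset

theorem finsum_mem_const {α M : Type*} [AddCommMonoid M] {S : Set α} (hS : S.Finite) (c : M) :
    ∑ᶠ _ ∈ S, c = S.ncard • c := by
  obtain ⟨s, rfl⟩ := hS.exists_finset_coe
  rw [finsum_mem_coe_finset, sum_const, Set.ncard_coe_finset]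

section Weights

variable {α : Type*} {S M : Set α} {w : α → ℝ}

theorem five_mul_finsum_eq (hS : S.Finite) (hwM : ∀ e ∈ M, w e = 1 / 5)
    (hwNot : ∀ e ∉ M, w e = 2 / 5) :
    5 * ∑ᶠ e ∈ S, w e = (S ∩ M).ncard + 2 * (S \ M).ncard := by
  rw [← finsum_mem_inter_add_sdiff M hS, finsum_mem_congr rfl fun e he => hwM e he.2,
    finsum_mem_congr rfl fun e he => hwNot e he.2, finsum_mem_const (hS.inter_of_left M),
    finsum_mem_const hS.sdiff, nsmul_eq_mul, nsmul_eq_mul]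
  ring

theorem finsum_eq_one_of_ncard_eq_three (hS : S.ncard = 3) (hSM : (S ∩ M).ncard = 1)
    (hwM : ∀ e ∈ M, w e = 1 / 5) (hwNot : ∀ e ∉ M, w e = 2 / 5) :
    ∑ᶠ e ∈ S, w e = 1 := by
  have hfin : S.Finite := Set.finite_of_ncard_ne_zero (by omega)
  have hSdiff : (S \ M).ncard = 2 := by
    have := Set.ncard_inter_add_ncard_sdiff_eq_ncard S M hfin
    omega
  have h5 := five_mul_finsum_eq hfin hwM hwNot
  rw [hSM, hSdiff] at h5
  norm_num at h5
  linarith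

theorem one_le_finsum_of_five_le_ncard (hfin : S.Finite) (hS : 5 ≤ S.ncard)
    (hwM : ∀ e ∈ M, w e = 1 / 5) (hwNot : ∀ e ∉ M, w e = 2 / 5) :
    1 ≤ ∑ᶠ e ∈ S, w e := by
  have h5 := five_mul_finsum_eq hfin hwM hwNot
  have hsplit := Set.ncard_inter_add_ncard_sdiff_eq_ncard S M hfin
  have : (5 : ℝ) ≤ (S ∩ M).ncard + (S \ M).ncard := by exact_mod_cast hsplit ▸ hS
  have : (0 : ℝ) ≤ (S \ M).ncard := Nat.cast_nonneg _
  linarith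

end Weights

namespace SimpleGraph

variable {V : Type*} {G : SimpleGraph V}

theorem Walk.exists_mem_edges_mem_edgeBoundary {W : Set V} {a b : V} (p : G.Walk a b)
    (ha : a ∈ W) (hb : b ∉ W) : ∃ e ∈ p.edges, e ∈ edgeBoundary G W := by
  induction p with
  | nil => exact absurd ha hb
  | @cons u v _ h q ih =>
    by_cases hv : v ∈ W
    · obtain ⟨e, he, hbd⟩ := ih hv hb
      exact ⟨e, by simp [he], hbd⟩
    · exact ⟨s(u, v), by simp, h, u, v, rfl, ha, hv⟩

/-- A cut consisting of one edge is a bridge: every walk across the cut uses that edge. -/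
theorem Bridgeless.ncard_edgeBoundary_ne_one (hG : Bridgeless G) (W : Set V) :
    (edgeBoundary G W).ncard ≠ 1 := by
  intro h1
  obtain ⟨e, he⟩ := Set.ncard_eq_one.mp h1
  obtain ⟨-, u, v, rfl, hu, hv⟩ : e ∈ edgeBoundary G W := he ▸ rfl
  refine hG s(u, v) (isBridge_iff_forall_walk_mem_edges.mpr fun p => ?_)
  obtain ⟨e', he', hbd⟩ := p.exists_mem_edges_mem_edgeBoundary hu hv
  rw [he, Set.mem_singleton_iff] at hbd
  exact hbd ▸ he'

theorem IsCubic.degree_eq (hG : IsCubic G) (v : V) [Fintype (G.neighborSet v)] :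
    G.degree v = 3 := by
  rw [← card_neighborSet_eq_degree, ← Nat.card_eq_fintype_card, Nat.card_coe_set_eq, hG v]

theorem IsCubic.ncard_incidenceSet (hG : IsCubic G) (v : V) :
    (G.incidenceSet v).ncard = 3 := by
  classical
  rw [← Nat.card_coe_set_eq, Nat.card_congr (G.incidenceSetEquivNeighborSet v),
    Nat.card_coe_set_eq, hG v]

theorem Subgraph.IsPerfectMatching.ncard_incidenceSet_inter_edgeSet {N : G.Subgraph}
    (hN : N.IsPerfectMatching) (v : V) :
    (G.incidenceSet v ∩ N.edgeSet).ncard = 1 := by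
  obtain ⟨u, hu, huniq⟩ := Subgraph.isPerfectMatching_iff.mp hN v
  refine Set.ncard_eq_one.mpr ⟨s(v, u), Set.eq_singleton_iff_unique_mem.mpr ⟨?_, ?_⟩⟩
  · exact ⟨⟨N.adj_sub hu, Sym2.mem_mk_left v u⟩, hu⟩
  · rintro e ⟨⟨-, hve⟩, heN⟩
    obtain ⟨x, rfl⟩ := Sym2.mem_iff_exists.mp hve
    rw [huniq x heN]

section Parity

variable [Fintype V] [DecidableEq V] [DecidableRel G.Adj] (W : Finset V)

theorem card_darts_fst_mem :
    #{d : G.Dart | d.fst ∈ W} = ∑ v ∈ W, G.degree v := by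
  rw [card_eq_sum_card_fiberwise (f := fun d : G.Dart => d.fst) (t := W)
    fun d hd => by simpa using hd]
  refine sum_congr rfl fun v hv => ?_
  rw [← G.dart_fst_fiber_card_eq_degree v, filter_filter]
  exact congrArg card (filter_congr fun d _ => and_iff_right_of_imp fun h => h ▸ hv)

/-- Reversing darts is a fixed-point-free involution of the darts inside `W`. -/
theorem even_card_darts_inside :
    Even #{d : G.Dart | d.fst ∈ W ∧ d.snd ∈ W} := by
  rw [← ZMod.natCast_eq_zero_iff_even, card_eq_sum_ones, Nat.cast_sum, Nat.cast_one]
  refine sum_involution (fun d _ => d.symm) (fun _ _ => by decide)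
    (fun d _ _ => d.symm_ne) (fun d hd => ?_) (fun d _ => d.symm_symm)
  simp only [mem_filter, mem_univ, true_and] at hd ⊢
  exact hd.symm

theorem card_darts_leaving :
    #{d : G.Dart | d.fst ∈ W ∧ d.snd ∉ W} = (edgeBoundary G W).ncard := by
  have hboundary : edgeBoundary G W =
      (({d : G.Dart | d.fst ∈ W ∧ d.snd ∉ W} : Finset _).image Dart.edge : Set _) := by
    ext e
    simp only [coe_image, coe_filter, mem_univ, true_and, Set.mem_image, Set.mem_ofPred_eq]
    constructor
    · rintro ⟨he, u, v, rfl, hu, hv⟩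
      exact ⟨⟨(u, v), he⟩, ⟨hu, hv⟩, rfl⟩
    · rintro ⟨d, ⟨hu, hv⟩, rfl⟩
      exact ⟨d.edge_mem, d.fst, d.snd, rfl, hu, hv⟩
  rw [hboundary, Set.ncard_coe_finset, card_image_of_injOn]
  intro d hd d' hd' hedge
  refine ((dart_edge_eq_iff d d').mp hedge).resolve_right fun hsymm => ?_
  simp only [coe_filter, mem_univ, true_and, Set.mem_ofPred_eq] at hd hd'
  subst hsymm
  exact hd'.2 hd.1

theorem ncard_edgeBoundary_modEq_sum_degree :
    (edgeBoundary G W).ncard ≡ ∑ v ∈ W, G.degree v [MOD 2] := by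
  have hsplit := card_filter_add_card_filter_not (s := {d : G.Dart | d.fst ∈ W})
    (fun d => d.snd ∈ W)
  simp only [filter_filter, card_darts_fst_mem, card_darts_leaving] at hsplit
  obtain ⟨k, hk⟩ := even_card_darts_inside (G := G) W
  unfold Nat.ModEq
  omega

end Parity

theorem IsCubic.odd_ncard_edgeBoundary [Fintype V] (hG : IsCubic G) {W : Finset V}
    (hW : Odd #W) : Odd (edgeBoundary G W).ncard := by
  classical
  have hmod := ncard_edgeBoundary_modEq_sum_degree (G := G) W
  simp only [hG.degree_eq, sum_const, smul_eq_mul] at hmod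
  obtain ⟨k, hk⟩ := hW
  unfold Nat.ModEq at hmod
  rw [Nat.odd_iff]
  omega

end SimpleGraph

/-- If `N` is a perfect matching of a bridgeless cubic graph meeting every
3-edge-cut in exactly one edge, then the weighting `1/5` on `N` and `2/5` elsewhere
is a fractional perfect matching. -/
theorem stmt_13 {V : Type*} [Fintype V] (G : SimpleGraph V)
    (hcubic : IsCubic G) (hbridgeless : Bridgeless G)
    (N : G.Subgraph) (hN : N.IsPerfectMatching)
    (h3cut : ∀ W : Finset V, (edgeBoundary G (W : Set V)).ncard = 3 →
      (edgeBoundary G (W : Set V) ∩ N.edgeSet).ncard = 1)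
    (w : Sym2 V → ℝ)
    (hwN : ∀ e ∈ N.edgeSet, w e = 1 / 5)
    (hwNot : ∀ e ∉ N.edgeSet, w e = 2 / 5) :
    IsFractionalPerfectMatching G w := by
  refine ⟨fun e _ => ?_, fun v => ?_, fun W hW => ?_⟩
  · by_cases he : e ∈ N.edgeSet
    · rw [hwN e he]; norm_num
    · rw [hwNot e he]; norm_num
  · exact finsum_eq_one_of_ncard_eq_three (hcubic.ncard_incidenceSet v)
      (hN.ncard_incidenceSet_inter_edgeSet v) hwN hwNot
  · obtain ⟨k, hk⟩ := hcubic.odd_ncard_edgeBoundary hW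
    have hne := hbridgeless.ncard_edgeBoundary_ne_one W
    obtain h3 | h5 : (edgeBoundary G (W : Set V)).ncard = 3 ∨
        5 ≤ (edgeBoundary G (W : Set V)).ncard := by omega
    · exact (finsum_eq_one_of_ncard_eq_three h3 (h3cut W h3) hwN hwNot).ge
    · exact one_le_finsum_of_five_le_ncard (Set.toFinite _) h5 hwN hwNot
end

section
/- There exists a connected cubic graph G admitting a perfect matching such that for every pair of perfect matchings M1, M2 of G, the complement of M1 ∪ M2 contains an odd cycle (i.e., G has no S4-pair). -/
/-!
The witness is a triangle whose three vertices are joined by bridges to three copies of `K₄` with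
one edge subdivided. Each copy has five vertices and is left only through its bridge, so by parity
every perfect matching uses all three bridges and hence no triangle edge. The triangle therefore
survives the deletion of any two perfect matchings, and an odd cycle forbids a 2-colouring.
-/

open SimpleGraph

namespace SimpleGraph

variable {V : Type*} {G : SimpleGraph V}

theorem connected_of_forall_exists_adj_lt [Preorder V] [WellFoundedLT V] (r : V)
    (h : ∀ v, v ≠ r → ∃ w < v, G.Adj v w) : G.Connected := by
  have hr : ∀ v, G.Reachable r v := fun v ↦ by
    induction v using WellFoundedLT.induction with
    | _ v ih =>
      by_cases hv : v = r
      · exact hv ▸ Reachable.rfl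
      · obtain ⟨w, hwv, hadj⟩ := h v hv
        exact (ih w hwv).trans hadj.symm.reachable
  have : Nonempty V := ⟨r⟩
  exact ⟨fun u v ↦ (hr u).symm.trans (hr v)⟩

theorem not_colorable_two_of_triangle {a b c : V} (hab : G.Adj a b) (hbc : G.Adj b c)
    (hac : G.Adj a c) : ¬ G.Colorable 2 := fun hcol ↦ by
  classical
  exact hcol.cliqueFree (m := 3) (by norm_num) {a, b, c} (is3Clique_triple_iff.2 ⟨hab, hac, hbc⟩)

theorem adj_deleteEdges_edgeSet_union {M₁ M₂ : G.Subgraph} {x y : V} (hxy : G.Adj x y)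
    (h₁ : ¬ M₁.Adj x y) (h₂ : ¬ M₂.Adj x y) :
    (G.deleteEdges (M₁.edgeSet ∪ M₂.edgeSet)).Adj x y := by
  simp only [deleteEdges_adj, Set.mem_union, Subgraph.mem_edgeSet]
  tauto

namespace Subgraph

def ofInvolutive (f : V → V) (hf : Function.Involutive f) (hadj : ∀ v, G.Adj v (f v)) :
    G.Subgraph where
  verts := Set.univ
  Adj v w := f v = w
  adj_sub := by
    rintro v _ rfl
    exact hadj v
  edge_vert _ := Set.mem_univ _
  symm := ⟨fun v _ h ↦ h ▸ hf v⟩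

theorem isPerfectMatching_ofInvolutive (f : V → V) (hf : Function.Involutive f)
    (hadj : ∀ v, G.Adj v (f v)) : (ofInvolutive f hf hadj).IsPerfectMatching :=
  isPerfectMatching_iff.2 fun _ ↦ existsUnique_eq'

variable {M : G.Subgraph}

theorem IsPerfectMatching.even_card_of_forall_adj_mem (hM : M.IsPerfectMatching) {S : Finset V}
    (hS : ∀ x ∈ S, ∀ y, M.Adj x y → y ∈ S) : Even S.card := by
  have hmatch : (M.induce (S : Set V)).IsMatching := by
    rintro x (hx : x ∈ S)
    obtain ⟨y, hxy, huniq⟩ := hM.1 (hM.2 x)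
    exact ⟨y, ⟨hx, hS x hx y hxy, hxy⟩, fun z hz ↦ huniq z hz.2.2⟩
  let : Fintype (M.induce (S : Set V)).verts := inferInstanceAs (Fintype (S : Set V))
  simpa using hmatch.even_card

theorem IsPerfectMatching.adj_of_odd_card (hM : M.IsPerfectMatching) {S : Finset V}
    (hodd : Odd S.card) {u v : V} (hleave : ∀ x ∈ S, ∀ y ∉ S, G.Adj x y → x = u ∧ y = v) :
    M.Adj u v := by
  by_contra huv
  refine Nat.not_even_iff_odd.2 hodd (hM.even_card_of_forall_adj_mem fun x hx y hxy ↦ ?_)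
  by_contra hy
  obtain ⟨rfl, rfl⟩ := hleave x hx y hy (M.adj_sub hxy)
  exact huv hxy

end Subgraph

end SimpleGraph

namespace BridgedTriangle

open Subgraph

-- Vertex `k ∈ {0, 6, 12}` lies on the triangle and `k + 1` subdivides the edge `(k + 2)(k + 3)` of
-- the `K₄` on `k + 2, …, k + 5`; with this labelling every vertex but `0` has a smaller neighbour.
def edges : List (Fin 18 × Fin 18) :=
  [(0, 6), (6, 12), (0, 12)] ++
    [0, 6, 12].flatMap fun k ↦
      [(k, k + 1), (k + 1, k + 2), (k + 1, k + 3), (k + 2, k + 4), (k + 2, k + 5),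
        (k + 3, k + 4), (k + 3, k + 5), (k + 4, k + 5)]

def graph : SimpleGraph (Fin 18) := fromRel fun x y ↦ (x, y) ∈ edges

instance : DecidableRel graph.Adj := fun x y ↦
  inferInstanceAs (Decidable (x ≠ y ∧ ((x, y) ∈ edges ∨ (y, x) ∈ edges)))

theorem connected : graph.Connected :=
  connected_of_forall_exists_adj_lt 0 (by decide)

theorem isCubic : IsCubic graph := fun v ↦ by
  rw [Set.ncard_eq_toFinset_card']
  revert v
  decide

def partner (x : Fin 18) : Fin 18 :=
  match (x : ℕ) % 6 with
  | 0 => x + 1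
  | 1 => x - 1
  | 2 => x + 2
  | 3 => x + 2
  | _ => x - 2

theorem partner_involutive : Function.Involutive partner := by
  unfold Function.Involutive
  decide

theorem adj_partner : ∀ x, graph.Adj x (partner x) := by decide

theorem exists_isPerfectMatching : ∃ M : graph.Subgraph, M.IsPerfectMatching :=
  ⟨_, isPerfectMatching_ofInvolutive partner partner_involutive adj_partner⟩

theorem adj_bridge {M : graph.Subgraph} (hM : M.IsPerfectMatching) {k : Fin 18}
    (hk : k = 0 ∨ k = 6 ∨ k = 12) : M.Adj k (k + 1) := by
  refine (hM.adj_of_odd_card (S := Finset.Icc (k + 1) (k + 5)) ?_ ?_).symm <;>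
    rcases hk with rfl | rfl | rfl <;> decide

theorem not_adj_triangle {M : graph.Subgraph} (hM : M.IsPerfectMatching) :
    ¬ M.Adj 0 6 ∧ ¬ M.Adj 6 12 ∧ ¬ M.Adj 0 12 := by
  have h0 := adj_bridge hM (k := 0) (by decide)
  have h6 := adj_bridge hM (k := 6) (by decide)
  refine ⟨fun h ↦ ?_, fun h ↦ ?_, fun h ↦ ?_⟩
  · exact absurd (hM.1.eq_of_adj_left h h0) (by decide)
  · exact absurd (hM.1.eq_of_adj_left h h6) (by decide)
  · exact absurd (hM.1.eq_of_adj_left h h0) (by decide)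

end BridgedTriangle

open BridgedTriangle in
/-- There is a connected cubic graph which has a perfect matching but no
`S₄`-pair: for every two perfect matchings `M1, M2`, the complement of
`M1 ∪ M2` contains an odd cycle (is not bipartite). -/
theorem stmt_18 :
    ∃ (n : ℕ) (G : SimpleGraph (Fin n)),
      G.Connected ∧ IsCubic G ∧
      (∃ M : G.Subgraph, M.IsPerfectMatching) ∧
      ∀ M1 M2 : G.Subgraph, M1.IsPerfectMatching → M2.IsPerfectMatching →
        ¬ (G.deleteEdges (M1.edgeSet ∪ M2.edgeSet)).Colorable 2 := by
  refine ⟨18, graph, connected, isCubic, exists_isPerfectMatching, fun M1 M2 h1 h2 ↦ ?_⟩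
  obtain ⟨h1a, h1b, h1c⟩ := not_adj_triangle h1
  obtain ⟨h2a, h2b, h2c⟩ := not_adj_triangle h2
  exact not_colorable_two_of_triangle (adj_deleteEdges_edgeSet_union (by decide) h1a h2a)
    (adj_deleteEdges_edgeSet_union (by decide) h1b h2b)
    (adj_deleteEdges_edgeSet_union (by decide) h1c h2c)
end
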